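/- arXiv:2003.13565 — 5 statements merged into one kernel-verified Lean document; each statement's English description precedes it below -/
import Mathlib

section
/- (Combinatorial content of Lemma 3.3 and Proposition 3.6) For every plane partition π and every integer m ∈ ℤ, the coefficient c_{(m,m,m)}(π,π) of t_1^m t_2^m t_3^m in the vertex term V(π,π) vanishes; in particular V(π,π) has zero constant term. (Geometrically: no integer power of the Calabi–Yau weight 𝔱 = t_1t_2t_3 — in particular no trivial weight — occurs in the virtual tangent space of the Quot scheme at a torus-fixed point, so the deformations and obstructions at a fixed point are entirely T-movable.) -/
open Finset

/-- A plane partition: a finite, downward-closed subset of ℕ³. -/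
def IsPlanePartition (π : Finset (ℕ × ℕ × ℕ)) : Prop :=
  ∀ p ∈ π, ∀ q : ℕ × ℕ × ℕ, q.1 ≤ p.1 → q.2.1 ≤ p.2.1 → q.2.2 ≤ p.2.2 → q ∈ π

/-- `Q_π = Σ_{(a,b,c) ∈ π} t₁^a t₂^b t₃^c` in the Laurent polynomial ring
`ℤ[t₁^{±1}, t₂^{±1}, t₃^{±1}]`. -/
noncomputable def Qpoly (π : Finset (ℕ × ℕ × ℕ)) : AddMonoidAlgebra ℤ (ℤ × ℤ × ℤ) :=
  ∑ p ∈ π, AddMonoidAlgebra.single ((p.1 : ℤ), (p.2.1 : ℤ), (p.2.2 : ℤ)) 1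

/-- The image of `Q_π` under the bar involution `tᵢ ↦ tᵢ⁻¹`. -/
noncomputable def Qbar (π : Finset (ℕ × ℕ × ℕ)) : AddMonoidAlgebra ℤ (ℤ × ℤ × ℤ) :=
  ∑ p ∈ π, AddMonoidAlgebra.single (-(p.1 : ℤ), -(p.2.1 : ℤ), -(p.2.2 : ℤ)) 1

/-- The vertex term
`V(π,π') = Q_{π'} − 𝔱⁻¹·(Q_π bar) + 𝔱⁻¹(1−t₁)(1−t₂)(1−t₃)·Q_{π'}·(Q_π bar)`,
where `𝔱 = t₁t₂t₃`. -/
noncomputable def vertexTerm (π π' : Finset (ℕ × ℕ × ℕ)) : AddMonoidAlgebra ℤ (ℤ × ℤ × ℤ) :=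
  Qpoly π' - AddMonoidAlgebra.single (-1, -1, -1) 1 * Qbar π +
    AddMonoidAlgebra.single (-1, -1, -1) 1 *
      ((1 - AddMonoidAlgebra.single (1, 0, 0) 1) * (1 - AddMonoidAlgebra.single (0, 1, 0) 1) *
        (1 - AddMonoidAlgebra.single (0, 0, 1) 1)) * Qpoly π' * Qbar π

/-- The coefficient `c_μ(π,π')` of `t^μ` in `V(π,π')`. -/
noncomputable def vc (π π' : Finset (ℕ × ℕ × ℕ)) (μ : ℤ × ℤ × ℤ) : ℤ :=
  (vertexTerm π π').coeff μ

/-!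
Induct on `π`, removing a maximal box `p`. With `σ = π \ {p}`, the vertex term changes by
`t^p - 𝔱⁻¹ t^{-p} + 𝔱⁻¹(1 - t₁)(1 - t₂)(1 - t₃) (t^p Q̄_σ + Q_σ t^{-p} + 1)`. On the closed
positive orthant, and by the symmetry `v ↦ -v` on the closed negative one, the coefficients of
`t^p Q̄_σ + Q_σ t^{-p} + 1` form the indicator of the box `[-p, p]`: downward closure of `π`
supplies the boxes below `p`, maximality of `p` excludes those above it. The eight exponents
feeding the coefficient of `𝔱^m` in the last term span the cube `[m, m + 1]³`, which lies in one
orthant, so that coefficient is the mixed third difference of the box indicator. It factors into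
three one-variable differences, with product `[p = (-1-m, -1-m, -1-m)] - [p = (m, m, m)]`, which
cancels the change of the first two terms.
-/

namespace VertexTerm

open AddMonoidAlgebra

def toInt3 (p : ℕ × ℕ × ℕ) : ℤ × ℤ × ℤ := (p.1, p.2.1, p.2.2)

lemma toInt3_injective : Function.Injective toInt3 := by
  intro p q h
  simp only [toInt3, Prod.mk.injEq, Nat.cast_inj] at h
  exact Prod.ext h.1 (Prod.ext h.2.1 h.2.2)

lemma toInt3_le_toInt3 {p q : ℕ × ℕ × ℕ} : toInt3 p ≤ toInt3 q ↔ p ≤ q := by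
  simp [toInt3, Prod.le_def]

lemma zero_le_toInt3 (p : ℕ × ℕ × ℕ) : 0 ≤ toInt3 p := by
  simp [toInt3, Prod.le_def]

def intPoints (π : Finset (ℕ × ℕ × ℕ)) : Finset (ℤ × ℤ × ℤ) :=
  π.map ⟨toInt3, toInt3_injective⟩

lemma toInt3_mem_intPoints {π : Finset (ℕ × ℕ × ℕ)} {p : ℕ × ℕ × ℕ} :
    toInt3 p ∈ intPoints π ↔ p ∈ π :=
  mem_map' _

lemma exists_eq_toInt3_of_mem_intPoints {π : Finset (ℕ × ℕ × ℕ)} {w : ℤ × ℤ × ℤ}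
    (hw : w ∈ intPoints π) : ∃ q ∈ π, toInt3 q = w := by
  simpa [intPoints] using hw

lemma intPoints_erase (π : Finset (ℕ × ℕ × ℕ)) (p : ℕ × ℕ × ℕ) :
    intPoints (π.erase p) = (intPoints π).erase (toInt3 p) :=
  map_erase _ _ _

lemma zero_le_of_mem_intPoints {π : Finset (ℕ × ℕ × ℕ)} {w : ℤ × ℤ × ℤ} (hw : w ∈ intPoints π) :
    0 ≤ w := by
  obtain ⟨q, -, rfl⟩ := exists_eq_toInt3_of_mem_intPoints hw
  exact zero_le_toInt3 q

lemma mem_intPoints_of_le {π : Finset (ℕ × ℕ × ℕ)} (hπ : IsPlanePartition π) {p : ℕ × ℕ × ℕ}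
    (hp : p ∈ π) {w : ℤ × ℤ × ℤ} (h0 : 0 ≤ w) (hw : w ≤ toInt3 p) : w ∈ intPoints π := by
  obtain ⟨x, y, z⟩ := w
  simp only [Prod.le_def, Prod.fst_zero, Prod.snd_zero, toInt3] at h0 hw
  have hq : (x.toNat, y.toNat, z.toNat) ∈ π := by
    refine hπ p hp _ ?_ ?_ ?_ <;> dsimp only <;> omega
  have hxyz : toInt3 (x.toNat, y.toNat, z.toNat) = (x, y, z) := by
    simp only [toInt3, Int.toNat_of_nonneg h0.1, Int.toNat_of_nonneg h0.2.1,
      Int.toNat_of_nonneg h0.2.2]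
  rw [← hxyz]
  exact toInt3_mem_intPoints.2 hq

lemma eq_of_mem_intPoints_of_le {π : Finset (ℕ × ℕ × ℕ)} {p : ℕ × ℕ × ℕ} (hp : Maximal (· ∈ π) p)
    {w : ℤ × ℤ × ℤ} (hw : w ∈ intPoints π) (hpw : toInt3 p ≤ w) : w = toInt3 p := by
  obtain ⟨q, hq, rfl⟩ := exists_eq_toInt3_of_mem_intPoints hw
  exact congrArg toInt3 (hp.eq_of_le hq (toInt3_le_toInt3.1 hpw)).symm

lemma _root_.IsPlanePartition.erase {π : Finset (ℕ × ℕ × ℕ)} (hπ : IsPlanePartition π)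
    {p : ℕ × ℕ × ℕ} (hp : Maximal (· ∈ π) p) : IsPlanePartition (π.erase p) := by
  intro q hq r h1 h2 h3
  rw [mem_erase] at hq ⊢
  refine ⟨?_, hπ q hq.2 r h1 h2 h3⟩
  rintro rfl
  exact hq.1 (hp.eq_of_le hq.2 ⟨h1, h2, h3⟩).symm

lemma Qpoly_eq_sum_intPoints (π : Finset (ℕ × ℕ × ℕ)) :
    Qpoly π = ∑ w ∈ intPoints π, single w 1 := by
  simp [Qpoly, intPoints, toInt3]

lemma Qbar_eq_sum_intPoints (π : Finset (ℕ × ℕ × ℕ)) :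
    Qbar π = ∑ w ∈ intPoints π, single (-w) 1 := by
  simp [Qbar, intPoints, toInt3]

lemma coeff_Qpoly (π : Finset (ℕ × ℕ × ℕ)) (w : ℤ × ℤ × ℤ) :
    (Qpoly π).coeff w = if w ∈ intPoints π then 1 else 0 := by
  simp [Qpoly_eq_sum_intPoints, coeff_sum, coeff_single, Finsupp.single_apply]

lemma coeff_Qbar (π : Finset (ℕ × ℕ × ℕ)) (w : ℤ × ℤ × ℤ) :
    (Qbar π).coeff w = if -w ∈ intPoints π then 1 else 0 := by
  simp [Qbar_eq_sum_intPoints, coeff_sum, coeff_single, Finsupp.single_apply, neg_eq_iff_eq_neg]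

lemma Qpoly_insert {σ : Finset (ℕ × ℕ × ℕ)} {p : ℕ × ℕ × ℕ} (hp : p ∉ σ) :
    Qpoly (insert p σ) = single (toInt3 p) 1 + Qpoly σ :=
  sum_insert hp

lemma Qbar_insert {σ : Finset (ℕ × ℕ × ℕ)} {p : ℕ × ℕ × ℕ} (hp : p ∉ σ) :
    Qbar (insert p σ) = single (-toInt3 p) 1 + Qbar σ :=
  sum_insert hp

/-- `𝔱⁻¹(1 - t₁)(1 - t₂)(1 - t₃)` -/
noncomputable def cyFactor : AddMonoidAlgebra ℤ (ℤ × ℤ × ℤ) :=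
  single (-1, -1, -1) 1 *
    ((1 - single (1, 0, 0) 1) * (1 - single (0, 1, 0) 1) * (1 - single (0, 0, 1) 1))

def cubeDiff (f : ℤ × ℤ × ℤ → ℤ) (a b c : ℤ) : ℤ :=
  f (a + 1, b + 1, c + 1) - f (a, b + 1, c + 1) - f (a + 1, b, c + 1) - f (a + 1, b + 1, c)
    + f (a, b, c + 1) + f (a, b + 1, c) + f (a + 1, b, c) - f (a, b, c)

lemma cubeDiff_congr {f g : ℤ × ℤ × ℤ → ℤ} {a b c : ℤ}
    (h : Set.EqOn f g (Set.Icc (a, b, c) (a + 1, b + 1, c + 1))) :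
    cubeDiff f a b c = cubeDiff g a b c := by
  have hfg (x y z : ℤ) (hx : x ∈ Set.Icc a (a + 1)) (hy : y ∈ Set.Icc b (b + 1))
      (hz : z ∈ Set.Icc c (c + 1)) : f (x, y, z) = g (x, y, z) :=
    h ⟨⟨hx.1, hy.1, hz.1⟩, ⟨hx.2, hy.2, hz.2⟩⟩
  simp (disch := simp) only [cubeDiff, hfg]

lemma cubeDiff_mul (g h k : ℤ → ℤ) (a b c : ℤ) :
    cubeDiff (fun v => g v.1 * h v.2.1 * k v.2.2) a b c =
      (g (a + 1) - g a) * (h (b + 1) - h b) * (k (c + 1) - k c) := by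
  simp only [cubeDiff]
  ring

lemma coeff_cyFactor_mul (P : AddMonoidAlgebra ℤ (ℤ × ℤ × ℤ)) (a b c : ℤ) :
    (cyFactor * P).coeff (a, b, c) = cubeDiff P.coeff a b c := by
  simp only [cyFactor, mul_sub, sub_mul, mul_one, one_mul, single_mul_single, Prod.mk_add_mk,
    coeff_sub, Finsupp.coe_sub, Pi.sub_apply, coeff_single_mul_apply, Prod.neg_mk, cubeDiff]
  ring_nf

lemma vertexTerm_eq (π π' : Finset (ℕ × ℕ × ℕ)) :
    vertexTerm π π' =
      Qpoly π' - single (-1, -1, -1) 1 * Qbar π + cyFactor * (Qpoly π' * Qbar π) := by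
  rw [vertexTerm, cyFactor, mul_assoc]

/-- `Q_{insert p σ} Q̄_{insert p σ} - Q_σ Q̄_σ` -/
noncomputable def insertDelta (σ : Finset (ℕ × ℕ × ℕ)) (p : ℕ × ℕ × ℕ) :
    AddMonoidAlgebra ℤ (ℤ × ℤ × ℤ) :=
  single (toInt3 p) 1 * Qbar σ + Qpoly σ * single (-toInt3 p) 1 + 1

lemma vertexTerm_self_insert {σ : Finset (ℕ × ℕ × ℕ)} {p : ℕ × ℕ × ℕ} (hp : p ∉ σ) :
    vertexTerm (insert p σ) (insert p σ) = vertexTerm σ σ +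
      (single (toInt3 p) 1 - single ((-1, -1, -1) - toInt3 p) 1) + cyFactor * insertDelta σ p := by
  have hcancel :
      (single (toInt3 p) 1 * single (-toInt3 p) 1 : AddMonoidAlgebra ℤ (ℤ × ℤ × ℤ)) = 1 := by
    rw [single_mul_single, add_neg_cancel, mul_one, one_def]
  have htwist : (single (-1, -1, -1) 1 * single (-toInt3 p) 1 : AddMonoidAlgebra ℤ (ℤ × ℤ × ℤ)) =
      single ((-1, -1, -1) - toInt3 p) 1 := by
    rw [single_mul_single, mul_one, sub_eq_add_neg]
  rw [vertexTerm_eq, vertexTerm_eq, Qpoly_insert hp, Qbar_insert hp, insertDelta]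
  linear_combination (-1 : AddMonoidAlgebra ℤ (ℤ × ℤ × ℤ)) * htwist + cyFactor * hcancel

lemma coeff_insertDelta (σ : Finset (ℕ × ℕ × ℕ)) (p : ℕ × ℕ × ℕ) (v : ℤ × ℤ × ℤ) :
    (insertDelta σ p).coeff v =
      (if toInt3 p - v ∈ intPoints σ then 1 else 0) +
        (if toInt3 p + v ∈ intPoints σ then 1 else 0) + (if v = 0 then 1 else 0) := by
  simp [insertDelta, coeff_add, coeff_Qbar, coeff_Qpoly, one_def, coeff_single,
    Finsupp.single_apply, eq_comm, add_comm, neg_add_eq_sub]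

def absLeIndicator (k : ℕ) (x : ℤ) : ℤ := if |x| ≤ k then 1 else 0

lemma absLeIndicator_succ_sub (k : ℕ) (m : ℤ) :
    absLeIndicator k (m + 1) - absLeIndicator k m =
      (if (k : ℤ) = -1 - m then 1 else 0) - (if (k : ℤ) = m then 1 else 0) := by
  simp only [absLeIndicator]
  split_ifs <;> grind

def boxIndicator (p : ℕ × ℕ × ℕ) (v : ℤ × ℤ × ℤ) : ℤ :=
  absLeIndicator p.1 v.1 * absLeIndicator p.2.1 v.2.1 * absLeIndicator p.2.2 v.2.2

lemma boxIndicator_neg (p : ℕ × ℕ × ℕ) (v : ℤ × ℤ × ℤ) :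
    boxIndicator p (-v) = boxIndicator p v := by
  simp [boxIndicator, absLeIndicator]

lemma boxIndicator_of_nonneg (p : ℕ × ℕ × ℕ) {v : ℤ × ℤ × ℤ} (hv : 0 ≤ v) :
    boxIndicator p v = if v ≤ toInt3 p then 1 else 0 := by
  obtain ⟨x, y, z⟩ := v
  simp only [Prod.le_def, Prod.fst_zero, Prod.snd_zero] at hv
  simp only [boxIndicator, absLeIndicator, toInt3, Prod.mk_le_mk, abs_of_nonneg hv.1,
    abs_of_nonneg hv.2.1, abs_of_nonneg hv.2.2]
  split_ifs <;> simp_all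

lemma cubeDiff_boxIndicator (p : ℕ × ℕ × ℕ) (m : ℤ) :
    cubeDiff (boxIndicator p) m m m =
      (if toInt3 p = (-1 - m, -1 - m, -1 - m) then 1 else 0) -
        (if toInt3 p = (m, m, m) then 1 else 0) := by
  rw [show boxIndicator p = fun v =>
      absLeIndicator p.1 v.1 * absLeIndicator p.2.1 v.2.1 * absLeIndicator p.2.2 v.2.2 from rfl,
    cubeDiff_mul]
  simp only [absLeIndicator_succ_sub, toInt3, Prod.mk.injEq]
  split_ifs <;> omega

lemma coeff_insertDelta_erase {π : Finset (ℕ × ℕ × ℕ)} (hπ : IsPlanePartition π)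
    {p : ℕ × ℕ × ℕ} (hp : Maximal (· ∈ π) p) {v : ℤ × ℤ × ℤ} (hv : 0 ≤ v ∨ v ≤ 0) :
    (insertDelta (π.erase p) p).coeff v = boxIndicator p v := by
  rw [coeff_insertDelta]
  wlog h : 0 ≤ v generalizing v
  · have := this (Or.inl (neg_nonneg.2 (hv.resolve_left h))) (neg_nonneg.2 (hv.resolve_left h))
    simp only [sub_neg_eq_add, ← sub_eq_add_neg, neg_eq_zero, boxIndicator_neg] at this
    linarith
  have hsub : toInt3 p - v ∈ intPoints (π.erase p) ↔ v ≠ 0 ∧ v ≤ toInt3 p := by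
    rw [intPoints_erase, mem_erase, Ne, sub_eq_self, ← sub_nonneg]
    exact and_congr_right fun _ =>
      ⟨zero_le_of_mem_intPoints, fun h0 => mem_intPoints_of_le hπ hp.1 h0 (sub_le_self _ h)⟩
  have hadd : toInt3 p + v ∉ intPoints (π.erase p) := by
    rw [intPoints_erase, mem_erase]
    exact fun hmem => hmem.1 (eq_of_mem_intPoints_of_le hp hmem.2 (le_add_of_nonneg_right h))
  rw [if_neg hadd, if_congr hsub rfl rfl, boxIndicator_of_nonneg p h]
  by_cases hv0 : v = 0
  · simp [hv0, zero_le_toInt3]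
  · simp [hv0]

lemma vc_self_diag_erase {π : Finset (ℕ × ℕ × ℕ)} (hπ : IsPlanePartition π) {p : ℕ × ℕ × ℕ}
    (hp : Maximal (· ∈ π) p) (m : ℤ) :
    vc π π (m, m, m) = vc (π.erase p) (π.erase p) (m, m, m) := by
  have hcube : Set.EqOn (insertDelta (π.erase p) p).coeff (boxIndicator p)
      (Set.Icc (m, m, m) (m + 1, m + 1, m + 1)) := by
    intro v hv
    apply coeff_insertDelta_erase hπ hp
    rcases le_or_gt 0 m with h | h
    · exact Or.inl (le_trans (by simp [Prod.le_def, h]) hv.1)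
    · exact Or.inr (hv.2.trans (by simp only [Prod.le_def, Prod.fst_zero, Prod.snd_zero]; omega))
  have htwist : (-1, -1, -1) - toInt3 p = (m, m, m) ↔ toInt3 p = (-1 - m, -1 - m, -1 - m) := by
    simp only [toInt3, Prod.mk_sub_mk, Prod.mk.injEq]
    omega
  conv_lhs => rw [vc, ← insert_erase hp.1, vertexTerm_self_insert (notMem_erase p π)]
  rw [coeff_add, coeff_add, coeff_sub, Finsupp.add_apply, Finsupp.add_apply, Finsupp.sub_apply,
    coeff_cyFactor_mul, cubeDiff_congr hcube, cubeDiff_boxIndicator, coeff_single, coeff_single,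
    Finsupp.single_apply, Finsupp.single_apply, if_congr htwist rfl rfl, vc]
  ring

end VertexTerm

/-- **(Combinatorial content of Lemma 3.3 and Proposition 3.6.)** For every plane partition `π`
and every `m ∈ ℤ`, the coefficient of `t₁^m t₂^m t₃^m` (a power of the Calabi–Yau weight
`𝔱 = t₁t₂t₃`; in particular, for `m = 0`, the constant term) in the vertex term `V(π,π)`
vanishes. -/
theorem no_power_of_CY_weight_in_vertex (π : Finset (ℕ × ℕ × ℕ)) (hπ : IsPlanePartition π)
    (m : ℤ) : vc π π (m, m, m) = 0 := by
  induction π using Finset.strongInduction with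
  | H π ih =>
    obtain rfl | hne := π.eq_empty_or_nonempty
    · simp [vc, vertexTerm, Qpoly, Qbar]
    obtain ⟨p, hp⟩ := exists_maximal hne
    rw [VertexTerm.vc_self_diag_erase hπ hp]
    exact ih _ (erase_ssubset hp.1) (hπ.erase hp)
end

section
/- (Key identity in the proof of Theorem 6.2) Let K be a field, r ≥ 1 an integer, and u, q ∈ K nonzero elements with u² ≠ 1 and q ≠ u^{r−2i} for every integer 0 ≤ i ≤ r. Then Σ_{i=1}^{r} ((1 − u^{r−2i}q^{−1})(1 − u^{2i−r−2}q))^{−1} = (u^{r} − u^{−r}) / ((u − u^{−1}) · u^{r−1} · (1 − u^{−r}q^{−1})(1 − u^{−r}q)). -/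
/-!
With `v = u^{r-2i}` the `i`-th summand equals `(φ v - φ (v u²)) / (u² - 1)` for
`φ v = u² v / (q - v)`, so the sum telescopes to `(φ (u^{-r}) - φ (u^r)) / (u² - 1)`, which is the
right-hand side after clearing denominators.
-/

open Finset

theorem Finset.sum_Icc_one_sub_pred {M : Type*} [AddCommGroup M] (f : ℕ → M) (n : ℕ) :
    ∑ i ∈ Icc 1 n, (f i - f (i - 1)) = f n - f 0 := by
  induction n with
  | zero => simp
  | succ n ih =>
    rw [sum_Icc_succ_top (by omega), ih, Nat.add_sub_cancel]
    abel

section Field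

variable {K : Type*} [Field K]

theorem inv_one_sub_mul_one_sub_eq_sub_div {c v q : K} (hc : c ≠ 0) (hc1 : c ≠ 1) (hv : v ≠ 0)
    (hq : q ≠ 0) (hqv : q ≠ v) (hqvc : q ≠ v * c) :
    ((1 - v * q⁻¹) * (1 - (v * c)⁻¹ * q))⁻¹
      = (c * v / (q - v) - c * (v * c) / (q - v * c)) / (c - 1) := by
  have h1 : q - v ≠ 0 := sub_ne_zero.mpr hqv
  have h2 : q - v * c ≠ 0 := sub_ne_zero.mpr hqvc
  have h3 : c - 1 ≠ 0 := sub_ne_zero.mpr hc1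
  field_simp
  ring

theorem sub_div_sq_sub_one_eq_bracket_quotient {u w q : K} (hw : w ≠ 0) (hq : q ≠ 0)
    (hu2 : u ^ 2 ≠ 1) (hqw : q ≠ w) (hqw' : q ≠ w⁻¹) :
    (u ^ 2 * w⁻¹ / (q - w⁻¹) - u ^ 2 * w / (q - w)) / (u ^ 2 - 1)
      = (w - w⁻¹) / ((u - u⁻¹) * (w * u⁻¹) * ((1 - w⁻¹ * q⁻¹) * (1 - w⁻¹ * q))) := by
  have h1 : q - w ≠ 0 := sub_ne_zero.mpr hqw
  have h2 : w * q - 1 ≠ 0 := by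
    rw [sub_ne_zero, mul_comm]
    exact fun h ↦ hqw' (eq_inv_of_mul_eq_one_left h)
  have h3 : u ^ 2 - 1 ≠ 0 := sub_ne_zero.mpr hu2
  field_simp
  ring

theorem inv_one_sub_zpow_mul_one_sub_zpow {u q : K} (hu : u ≠ 0) (hq : q ≠ 0) (hu2 : u ^ 2 ≠ 1)
    {n : ℤ} (hqn : q ≠ u ^ n) (hqn2 : q ≠ u ^ (n + 2)) :
    ((1 - u ^ n * q⁻¹) * (1 - u ^ (-n - 2) * q))⁻¹
      = (u ^ 2 * u ^ n / (q - u ^ n) - u ^ 2 * u ^ (n + 2) / (q - u ^ (n + 2))) / (u ^ 2 - 1) := by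
  have hshift : u ^ (n + 2) = u ^ n * u ^ 2 := by rw [zpow_add₀ hu, zpow_ofNat]
  rw [hshift] at hqn2 ⊢
  rw [show -n - 2 = -(n + 2) by ring, zpow_neg, hshift]
  exact inv_one_sub_mul_one_sub_eq_sub_div (pow_ne_zero 2 hu) hu2 (zpow_ne_zero n hu) hq hqn hqn2

end Field

theorem key_bracket_identity_general {K : Type*} [Field K] (r : ℕ) (u q : K)
    (hu : u ≠ 0) (hq : q ≠ 0) (hu2 : u ^ 2 ≠ 1)
    (hqu : ∀ i : ℕ, i ≤ r → q ≠ u ^ ((r : ℤ) - 2 * i)) :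
    ∑ i ∈ Finset.Icc 1 r,
        ((1 - u ^ ((r : ℤ) - 2 * i) * q⁻¹) * (1 - u ^ (2 * (i : ℤ) - r - 2) * q))⁻¹
      = (u ^ (r : ℤ) - u ^ (-(r : ℤ))) /
          ((u - u⁻¹) * u ^ ((r : ℤ) - 1) *
            ((1 - u ^ (-(r : ℤ)) * q⁻¹) * (1 - u ^ (-(r : ℤ)) * q))) := by
  set φ : ℕ → K := fun k ↦ u ^ 2 * u ^ ((r : ℤ) - 2 * k) / (q - u ^ ((r : ℤ) - 2 * k))
  have hterm : ∀ i ∈ Icc 1 r,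
      ((1 - u ^ ((r : ℤ) - 2 * i) * q⁻¹) * (1 - u ^ (2 * (i : ℤ) - r - 2) * q))⁻¹
        = (φ i - φ (i - 1)) / (u ^ 2 - 1) := by
    intro i hi
    obtain ⟨hi1, hir⟩ := mem_Icc.mp hi
    have hpred : (r : ℤ) - 2 * ((i - 1 : ℕ) : ℤ) = (r - 2 * i) + 2 := by omega
    have hqpred := hqu (i - 1) (by omega)
    rw [hpred] at hqpred
    rw [show 2 * (i : ℤ) - r - 2 = -((r : ℤ) - 2 * i) - 2 by ring,
      inv_one_sub_zpow_mul_one_sub_zpow hu hq hu2 (hqu i hir) hqpred]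
    simp only [φ, hpred]
  rw [sum_congr rfl hterm, ← sum_div, sum_Icc_one_sub_pred]
  have hφr : φ r = u ^ 2 * (u ^ (r : ℤ))⁻¹ / (q - (u ^ (r : ℤ))⁻¹) := by
    simp only [φ, ← zpow_neg]
    congr <;> ring
  have hφ0 : φ 0 = u ^ 2 * u ^ (r : ℤ) / (q - u ^ (r : ℤ)) := by simp [φ]
  have hqr : q ≠ (u ^ (r : ℤ))⁻¹ := by
    have h := hqu r le_rfl
    rwa [show (r : ℤ) - 2 * (r : ℕ) = -r by ring, zpow_neg] at h
  rw [hφr, hφ0, zpow_sub_one₀ hu, zpow_neg]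
  have hq0 : q ≠ u ^ (r : ℤ) := by simpa using hqu 0 (by omega)
  exact sub_div_sq_sub_one_eq_bracket_quotient (zpow_ne_zero _ hu) hq hu2 hq0 hqr

/-- **(Key identity in the proof of Theorem 6.2.)** Let `K` be a field, `r ≥ 1`, and
`u, q ∈ K` nonzero with `u² ≠ 1` and `q ≠ u^{r−2i}` for all integers `0 ≤ i ≤ r`. Then
`Σ_{i=1}^{r} ((1 − u^{r−2i}q⁻¹)(1 − u^{2i−r−2}q))⁻¹
  = (u^r − u^{−r}) / ((u − u⁻¹)·u^{r−1}·(1 − u^{−r}q⁻¹)(1 − u^{−r}q))`. -/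
theorem key_bracket_identity {K : Type*} [Field K] (r : ℕ) (hr : 1 ≤ r) (u q : K)
    (hu : u ≠ 0) (hq : q ≠ 0) (hu2 : u ^ 2 ≠ 1)
    (hqu : ∀ i : ℕ, i ≤ r → q ≠ u ^ ((r : ℤ) - 2 * i)) :
    ∑ i ∈ Finset.Icc 1 r,
        ((1 - u ^ ((r : ℤ) - 2 * i) * q⁻¹) * (1 - u ^ (2 * (i : ℤ) - r - 2) * q))⁻¹
      = (u ^ (r : ℤ) - u ^ (-(r : ℤ))) /
          ((u - u⁻¹) * u ^ ((r : ℤ) - 1) *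
            ((1 - u ^ (-(r : ℤ)) * q⁻¹) * (1 - u ^ (-(r : ℤ)) * q))) :=
  key_bracket_identity_general r u q hu hq hu2 hqu
end

section
/- (Subtorus factor computed in the proof of Theorem 8.7) Let r ≥ 1 and k be integers, let g := gcd(r,k) (a positive integer, with gcd(r,0) = r), and let n ≥ 1. Let t_1, t_2, t_3 be nonzero complex numbers with t_1t_2t_3 = exp(2πik/r) and t_i^n ≠ 1 for i = 1,2,3. Then the product ((1−(t_1t_2)^{−n})(1−(t_1t_3)^{−n})(1−(t_2t_3)^{−n}))/((1−t_1^{−n})(1−t_2^{−n})(1−t_3^{−n})) · Σ_{j=0}^{r−1} (t_1t_2t_3)^{−nj} equals −r if r/g divides n, and equals 0 otherwise. -/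
/-!
The product `t₁t₂t₃` is a primitive `r / gcd(r, k)`-th root of unity, so `w := (t₁t₂t₃)^{-n}`
satisfies `w ^ r = 1`, and `w = 1` exactly when `r / gcd(r, k) ∣ n`. If `w ≠ 1` the geometric sum
`Σ_{j<r} wʲ` vanishes. If `w = 1`, the sum is `r` and, writing `a, b, c` for `t₁ⁿ, t₂ⁿ, t₃ⁿ`, the
relation `abc = 1` turns `(ab)⁻¹, (ac)⁻¹, (bc)⁻¹` into `c, b, a`, so the ratio collapses to `-1`.
-/

open Complex Finset Real

theorem Rat.den_intCast_div_natCast (k : ℤ) {r : ℕ} (hr : r ≠ 0) :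
    ((k : ℚ) / r).den = r / Int.gcd r k := by
  rw [← Int.cast_natCast, ← Rat.divInt_eq_div, Rat.den_divInt, if_neg (by exact_mod_cast hr)]
  rfl

theorem Complex.isPrimitiveRoot_exp_int_div (k : ℤ) {r : ℕ} (hr : r ≠ 0) :
    IsPrimitiveRoot (exp (2 * π * I * k / r)) (r / Int.gcd r k) := by
  have h := isPrimitiveRoot_exp_rat ((k : ℚ) / r)
  rwa [Rat.den_intCast_div_natCast k hr, Rat.cast_div, Rat.cast_intCast, Rat.cast_natCast,
    ← mul_div_assoc] at h

theorem geom_sum_eq_ite_of_pow_eq_one {R : Type*} [Ring R] [NoZeroDivisors R] [DecidableEq R]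
    {w : R} {r : ℕ} (hw : w ^ r = 1) :
    ∑ j ∈ range r, w ^ j = if w = 1 then (r : R) else 0 := by
  split_ifs with h
  · simp [h]
  · have h_mul : (∑ j ∈ range r, w ^ j) * (w - 1) = 0 := by rw [geom_sum_mul, hw, sub_self]
    exact (mul_eq_zero.mp h_mul).resolve_right (sub_ne_zero.mpr h)

theorem plethystic_ratio_eq_neg_one {K : Type*} [Field K] {a b c : K}
    (ha : a ≠ 1) (hb : b ≠ 1) (hc : c ≠ 1) (habc : a * b * c = 1) :
    (1 - (a * b)⁻¹) * (1 - (a * c)⁻¹) * (1 - (b * c)⁻¹) /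
      ((1 - a⁻¹) * (1 - b⁻¹) * (1 - c⁻¹)) = -1 := by
  rw [inv_eq_of_mul_eq_one_right habc,
    inv_eq_of_mul_eq_one_right (a := a * c) (by rwa [mul_right_comm]),
    inv_eq_of_mul_eq_one_right (a := b * c) (by rwa [mul_comm, ← mul_assoc])]
  have ha0 : a ≠ 0 := left_ne_zero_of_mul (left_ne_zero_of_mul_eq_one habc)
  have hb0 : b ≠ 0 := right_ne_zero_of_mul (left_ne_zero_of_mul_eq_one habc)
  have hc0 : c ≠ 0 := right_ne_zero_of_mul_eq_one habc
  have ha1 : a - 1 ≠ 0 := sub_ne_zero.mpr ha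
  have hb1 : b - 1 ≠ 0 := sub_ne_zero.mpr hb
  have hc1 : c - 1 ≠ 0 := sub_ne_zero.mpr hc
  field_simp
  linear_combination (-((a - 1) * (b - 1) * (c - 1))) * habc

theorem subtorus_plethystic_factor_general (r : ℕ) (hr : 1 ≤ r) (k : ℤ) (n : ℕ)
    (t₁ t₂ t₃ : ℂ)
    (ht : t₁ * t₂ * t₃ = Complex.exp (2 * (Real.pi : ℂ) * Complex.I * k / r))
    (hn₁ : t₁ ^ n ≠ 1) (hn₂ : t₂ ^ n ≠ 1) (hn₃ : t₃ ^ n ≠ 1) :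
    ((1 - (t₁ * t₂) ^ (-(n : ℤ))) * (1 - (t₁ * t₃) ^ (-(n : ℤ))) *
          (1 - (t₂ * t₃) ^ (-(n : ℤ)))) /
        ((1 - t₁ ^ (-(n : ℤ))) * (1 - t₂ ^ (-(n : ℤ))) * (1 - t₃ ^ (-(n : ℤ)))) *
        ∑ j ∈ Finset.range r, (t₁ * t₂ * t₃) ^ (-(n : ℤ) * j)
      = if r / Int.gcd (r : ℤ) k ∣ n then -(r : ℂ) else 0 := by
  have hζ : IsPrimitiveRoot (t₁ * t₂ * t₃) (r / Int.gcd r k) :=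
    ht ▸ isPrimitiveRoot_exp_int_div k (by omega)
  have hζn : t₁ ^ n * t₂ ^ n * t₃ ^ n = 1 ↔ r / Int.gcd r k ∣ n := by
    rw [← mul_pow, ← mul_pow, hζ.pow_eq_one_iff_dvd]
  have hζr : (t₁ * t₂ * t₃) ^ r = 1 :=
    hζ.pow_eq_one_iff_dvd r |>.mpr <| Nat.div_dvd_of_dvd <| by
      exact_mod_cast Int.gcd_dvd_left (r : ℤ) k
  have hw : ((t₁ ^ n * t₂ ^ n * t₃ ^ n)⁻¹) ^ r = 1 := by
    rw [inv_pow, ← mul_pow, ← mul_pow, pow_right_comm, hζr, one_pow, inv_one]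
  simp only [zpow_mul, zpow_neg, zpow_natCast, mul_pow]
  rw [geom_sum_eq_ite_of_pow_eq_one hw]
  simp only [inv_eq_one, hζn]
  split_ifs with h
  · rw [plethystic_ratio_eq_neg_one hn₁ hn₂ hn₃ (hζn.mpr h), neg_one_mul]
  · rw [mul_zero]

/-- **(Subtorus factor computed in the proof of Theorem 8.7.)** Let `r ≥ 1`, `k ∈ ℤ`,
`g = gcd(r,k)`, and `n ≥ 1`. Let `t₁, t₂, t₃` be nonzero complex numbers with
`t₁t₂t₃ = exp(2πik/r)` and `tᵢⁿ ≠ 1` for `i = 1,2,3`. Then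
`((1−(t₁t₂)^{−n})(1−(t₁t₃)^{−n})(1−(t₂t₃)^{−n})) / ((1−t₁^{−n})(1−t₂^{−n})(1−t₃^{−n}))
  · Σ_{j=0}^{r−1} (t₁t₂t₃)^{−nj}` equals `−r` if `r/g ∣ n`, and `0` otherwise. -/
theorem subtorus_plethystic_factor (r : ℕ) (hr : 1 ≤ r) (k : ℤ) (n : ℕ) (hn : 1 ≤ n)
    (t₁ t₂ t₃ : ℂ) (h₁ : t₁ ≠ 0) (h₂ : t₂ ≠ 0) (h₃ : t₃ ≠ 0)
    (ht : t₁ * t₂ * t₃ = Complex.exp (2 * (Real.pi : ℂ) * Complex.I * k / r))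
    (hn₁ : t₁ ^ n ≠ 1) (hn₂ : t₂ ^ n ≠ 1) (hn₃ : t₃ ^ n ≠ 1) :
    ((1 - (t₁ * t₂) ^ (-(n : ℤ))) * (1 - (t₁ * t₃) ^ (-(n : ℤ))) *
          (1 - (t₂ * t₃) ^ (-(n : ℤ)))) /
        ((1 - t₁ ^ (-(n : ℤ))) * (1 - t₂ ^ (-(n : ℤ))) * (1 - t₃ ^ (-(n : ℤ)))) *
        ∑ j ∈ Finset.range r, (t₁ * t₂ * t₃) ^ (-(n : ℤ) * j)
      = if r / Int.gcd (r : ℤ) k ∣ n then -(r : ℂ) else 0 :=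
  subtorus_plethystic_factor_general r hr k n t₁ t₂ t₃ ht hn₁ hn₂ hn₃
end

section
/- (Lemma 6.3) Let π, π′ be plane partitions, s ≥ 1 an integer, and β_1, β_2, β_3 nonzero complex numbers; write β^μ := β_1^{μ_1}β_2^{μ_2}β_3^{μ_3} for μ ∈ ℤ³, and write V(π,π′) = Σ_μ c_μ t^μ, V(π′,π) = Σ_μ d_μ t^μ. For real L > 0 define f(L) := Π_{μ∈ℤ³} (L^{s/2}β^μ − L^{−s/2}β^{−μ})^{−c_μ} · Π_{μ∈ℤ³} (L^{−s/2}β^μ − L^{s/2}β^{−μ})^{−d_μ} (a finite product with integer exponents; for all sufficiently large L every factor is nonzero, so f is eventually well defined). Then f(L) tends to (−β_1β_2β_3)^{|π′|−|π|} as L → +∞. -/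
open Finset

/-- `β^μ = β₁^{μ₁} β₂^{μ₂} β₃^{μ₃}` for `μ ∈ ℤ³`. -/
noncomputable def betaPow (β : Fin 3 → ℂ) (μ : ℤ × ℤ × ℤ) : ℂ :=
  β 0 ^ μ.1 * β 1 ^ μ.2.1 * β 2 ^ μ.2.2

/-! With `y = L^{s/2} β^μ`, resp. `y = −L^{s/2} β^{−μ}`, every bracket is `y − y⁻¹ = y (1 − y⁻²)`
and `y⁻¹ → 0`, so `f(L)` is asymptotic to the product of the monomials `y^{−c_μ}`, `y^{−d_μ}`.
That product is constant. Writing `ε` for the augmentation, the power of `L^{s/2}` is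
`−ε V(π,π′) − ε V(π′,π) = 0` and the sign is `(−1)^{−ε V(π′,π)} = (−1)^{|π′|−|π|}`. The `β`-part
is `W V(π′,π) / W V(π,π′)` for the weight product `W(f) = Π (β^μ)^{f_μ}`, which satisfies
`W(fg) = W(f)^{ε g} W(g)^{ε f}`; since `ε(1 − tᵢ) = 0` the cubic term of `V` does not contribute,
and the ratio is `(β₁β₂β₃)^{|π′|−|π|}`. -/

open Filter Topology

section WeightProd

variable {G K : Type*} [CommGroupWithZero K]

noncomputable abbrev augmentation [AddMonoid G] : AddMonoidAlgebra ℤ G →ₐ[ℤ] ℤ :=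
  AddMonoidAlgebra.lift ℤ ℤ G 1

lemma augmentation_eq_sum [AddMonoid G] (f : AddMonoidAlgebra ℤ G) :
    augmentation f = ∑ μ ∈ f.coeff.support, f.coeff μ := by
  simp [AddMonoidAlgebra.lift_apply, Finsupp.sum]

noncomputable def weightProd (x : G → K) (f : AddMonoidAlgebra ℤ G) : K :=
  ∏ μ ∈ f.coeff.support, x μ ^ f.coeff μ

lemma finprod_eq_weightProd (x : G → K) (f : AddMonoidAlgebra ℤ G) :
    ∏ᶠ μ, x μ ^ f.coeff μ = weightProd x f := by
  refine finprod_eq_prod_of_mulSupport_subset _ fun μ hμ => ?_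
  by_contra h
  exact hμ (by simp [Finsupp.notMem_support_iff.mp h])

@[simp] lemma weightProd_zero (x : G → K) : weightProd x 0 = 1 := by
  simp [weightProd]

@[simp] lemma weightProd_single (x : G → K) (μ : G) (n : ℤ) :
    weightProd x (AddMonoidAlgebra.single μ n) = x μ ^ n :=
  Finsupp.prod_single_index (zpow_zero _)

lemma weightProd_add {x : G → K} (hx : ∀ μ, x μ ≠ 0) (f g : AddMonoidAlgebra ℤ G) :
    weightProd x (f + g) = weightProd x f * weightProd x g :=
  Finsupp.prod_add_index' (fun _ => zpow_zero _) fun μ _ _ => zpow_add₀ (hx μ) _ _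

lemma weightProd_neg (x : G → K) (f : AddMonoidAlgebra ℤ G) :
    weightProd x (-f) = (weightProd x f)⁻¹ := by
  simp [weightProd, Finsupp.support_neg, zpow_neg, Finset.prod_inv_distrib]

lemma weightProd_sub {x : G → K} (hx : ∀ μ, x μ ≠ 0) (f g : AddMonoidAlgebra ℤ G) :
    weightProd x (f - g) = weightProd x f / weightProd x g := by
  rw [sub_eq_add_neg, weightProd_add hx, weightProd_neg, div_eq_mul_inv]

lemma weightProd_mul_distrib (x y : G → K) (f : AddMonoidAlgebra ℤ G) :
    weightProd (x * y) f = weightProd x f * weightProd y f := by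
  simp [weightProd, mul_zpow, Finset.prod_mul_distrib]

lemma weightProd_inv_distrib (x : G → K) (f : AddMonoidAlgebra ℤ G) :
    weightProd x⁻¹ f = (weightProd x f)⁻¹ := by
  simp [weightProd, Finset.prod_inv_distrib]

lemma weightProd_ne_zero {x : G → K} (hx : ∀ μ, x μ ≠ 0) (f : AddMonoidAlgebra ℤ G) :
    weightProd x f ≠ 0 :=
  Finset.prod_ne_zero_iff.mpr fun μ _ => zpow_ne_zero _ (hx μ)

lemma weightProd_const [AddMonoid G] {a : K} (ha : a ≠ 0) (f : AddMonoidAlgebra ℤ G) :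
    weightProd (fun _ => a) f = a ^ augmentation f := by
  classical
  rw [weightProd, augmentation_eq_sum]
  induction f.coeff.support using Finset.induction_on with
  | empty => simp
  | insert μ s hμ ih => rw [Finset.prod_insert hμ, Finset.sum_insert hμ, ih, zpow_add₀ ha]

lemma weightProd_sum {ι : Type*} {x : G → K} (hx : ∀ μ, x μ ≠ 0) (s : Finset ι)
    (f : ι → AddMonoidAlgebra ℤ G) :
    weightProd x (∑ i ∈ s, f i) = ∏ i ∈ s, weightProd x (f i) := by
  classical
  induction s using Finset.induction_on with
  | empty => simp
  | insert i s hi ih => rw [Finset.sum_insert hi, Finset.prod_insert hi, weightProd_add hx, ih]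

variable [AddMonoid G] {x : G → K}

lemma weightProd_mul (hx0 : ∀ μ, x μ ≠ 0) (hx : ∀ μ ν, x (μ + ν) = x μ * x ν)
    (f g : AddMonoidAlgebra ℤ G) :
    weightProd x (f * g) = weightProd x f ^ augmentation g * weightProd x g ^ augmentation f := by
  have hne := weightProd_ne_zero hx0
  induction f using AddMonoidAlgebra.induction_linear with
  | zero => simp
  | add f₁ f₂ h₁ h₂ =>
    rw [add_mul, weightProd_add hx0, weightProd_add hx0, h₁, h₂, map_add, mul_zpow,
      zpow_add₀ (hne g), mul_mul_mul_comm]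
  | single μ a =>
    induction g using AddMonoidAlgebra.induction_linear with
    | zero => simp
    | add g₁ g₂ h₁ h₂ =>
      rw [mul_add, weightProd_add hx0, weightProd_add hx0, h₁, h₂, map_add, mul_zpow,
        zpow_add₀ (hne _), mul_mul_mul_comm]
    | single ν b =>
      simp only [AddMonoidAlgebra.single_mul_single, weightProd_single, hx, mul_zpow, ← zpow_mul,
        AddMonoidAlgebra.lift_single, MonoidHom.one_apply, smul_eq_mul, mul_one, mul_comm b a]

lemma weightProd_mul_of_augmentation_eq_zero (hx0 : ∀ μ, x μ ≠ 0)
    (hx : ∀ μ ν, x (μ + ν) = x μ * x ν) {f g : AddMonoidAlgebra ℤ G}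
    (hf : augmentation f = 0) (hg : augmentation g = 0) : weightProd x (f * g) = 1 := by
  simp [weightProd_mul hx0 hx, hf, hg]

end WeightProd

section Asymptotics

variable {G K : Type*} [Field K]

lemma sub_inv_eq_mul_one_sub_inv_sq (y : K) : y - y⁻¹ = y * (1 - y⁻¹ ^ 2) := by
  rcases eq_or_ne y 0 with rfl | hy
  · simp
  · field_simp

lemma weightProd_sub_inv (y : G → K) (f : AddMonoidAlgebra ℤ G) :
    weightProd (fun μ => y μ - (y μ)⁻¹) f =
      weightProd y f * weightProd (fun μ => 1 - (y μ)⁻¹ ^ 2) f := by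
  rw [← weightProd_mul_distrib]
  simp only [sub_inv_eq_mul_one_sub_inv_sq]
  rfl

lemma tendsto_weightProd_one_sub_inv_sq [TopologicalSpace K] [IsTopologicalDivisionRing K]
    {α : Type*} {l : Filter α} {y : α → G → K}
    (hy : ∀ μ, Tendsto (fun a => (y a μ)⁻¹) l (𝓝 0)) (f : AddMonoidAlgebra ℤ G) :
    Tendsto (fun a => weightProd (fun μ => 1 - (y a μ)⁻¹ ^ 2) f) l (𝓝 1) := by
  simpa [weightProd] using tendsto_finsetProd f.coeff.support fun μ _ =>
    (((hy μ).pow 2).const_sub 1).zpow₀ (f.coeff μ) (.inl (by simp))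

end Asymptotics

section Vertex

variable {β : Fin 3 → ℂ}

lemma betaPow_ne_zero (hβ : ∀ i, β i ≠ 0) (μ : ℤ × ℤ × ℤ) : betaPow β μ ≠ 0 :=
  mul_ne_zero (mul_ne_zero (zpow_ne_zero _ (hβ 0)) (zpow_ne_zero _ (hβ 1))) (zpow_ne_zero _ (hβ 2))

lemma betaPow_add (hβ : ∀ i, β i ≠ 0) (μ ν : ℤ × ℤ × ℤ) :
    betaPow β (μ + ν) = betaPow β μ * betaPow β ν := by
  simp only [betaPow, Prod.fst_add, Prod.snd_add, zpow_add₀ (hβ _)]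
  ring

lemma betaPow_neg (μ : ℤ × ℤ × ℤ) : betaPow β (-μ) = (betaPow β μ)⁻¹ := by
  simp only [betaPow, Prod.fst_neg, Prod.snd_neg, zpow_neg, mul_inv]

lemma augmentation_Qpoly (π : Finset (ℕ × ℕ × ℕ)) : augmentation (Qpoly π) = π.card := by
  simp [Qpoly]

lemma augmentation_Qbar (π : Finset (ℕ × ℕ × ℕ)) : augmentation (Qbar π) = π.card := by
  simp [Qbar]

lemma augmentation_vertexTerm (π π' : Finset (ℕ × ℕ × ℕ)) :
    augmentation (vertexTerm π π') = (π'.card : ℤ) - π.card := by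
  simp [vertexTerm, augmentation_Qpoly, augmentation_Qbar]

lemma weightProd_betaPow_Qbar (hβ : ∀ i, β i ≠ 0) (π : Finset (ℕ × ℕ × ℕ)) :
    weightProd (betaPow β) (Qbar π) = (weightProd (betaPow β) (Qpoly π))⁻¹ := by
  simp only [Qbar, Qpoly, weightProd_sum (betaPow_ne_zero hβ), weightProd_single, zpow_one,
    ← Finset.prod_inv_distrib, ← betaPow_neg, Prod.neg_mk]

lemma weightProd_betaPow_vertexTerm (hβ : ∀ i, β i ≠ 0) (π π' : Finset (ℕ × ℕ × ℕ)) :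
    weightProd (betaPow β) (vertexTerm π π') =
      weightProd (betaPow β) (Qpoly π') * weightProd (betaPow β) (Qpoly π) *
        (β 0 * β 1 * β 2) ^ (π.card : ℤ) := by
  have hx0 := betaPow_ne_zero hβ
  have hx := betaPow_add hβ
  let e : ℤ × ℤ × ℤ → AddMonoidAlgebra ℤ (ℤ × ℤ × ℤ) := fun μ => 1 - AddMonoidAlgebra.single μ 1
  let T := AddMonoidAlgebra.single ((-1 : ℤ), (-1 : ℤ), (-1 : ℤ)) (1 : ℤ)
  have he : ∀ μ, augmentation (e μ) = 0 := by simp [e]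
  have hcorr : weightProd (betaPow β)
      (T * (e (1, 0, 0) * e (0, 1, 0) * e (0, 0, 1)) * Qpoly π' * Qbar π) = 1 := by
    rw [show T * (e (1, 0, 0) * e (0, 1, 0) * e (0, 0, 1)) * Qpoly π' * Qbar π =
      e (1, 0, 0) * (e (0, 1, 0) * (T * e (0, 0, 1) * Qpoly π' * Qbar π)) by ring]
    exact weightProd_mul_of_augmentation_eq_zero hx0 hx (he _) (by rw [map_mul, he, zero_mul])
  rw [vertexTerm, weightProd_add hx0, weightProd_sub hx0, hcorr, weightProd_mul hx0 hx,
    weightProd_betaPow_Qbar hβ, augmentation_Qbar]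
  have hT : betaPow β (-1, -1, -1) = (β 0 * β 1 * β 2)⁻¹ := by
    rw [show ((-1 : ℤ), (-1 : ℤ), (-1 : ℤ)) = -(1, 1, 1) from rfl, betaPow_neg]
    simp [betaPow]
  simp only [weightProd_single, hT, AddMonoidAlgebra.lift_single, MonoidHom.one_apply,
    smul_eq_mul, mul_one, zpow_one, zpow_natCast, div_eq_mul_inv, mul_inv, inv_inv, ← inv_pow]
  ring

lemma weightProd_betaPow_vertexTerm_swap (hβ : ∀ i, β i ≠ 0) (π π' : Finset (ℕ × ℕ × ℕ)) :
    weightProd (betaPow β) (vertexTerm π' π) =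
      weightProd (betaPow β) (vertexTerm π π') * (β 0 * β 1 * β 2) ^ ((π'.card : ℤ) - π.card) := by
  have h0 : β 0 * β 1 * β 2 ≠ 0 := by simp [hβ]
  rw [weightProd_betaPow_vertexTerm hβ, weightProd_betaPow_vertexTerm hβ, zpow_sub₀ h0]
  field_simp

lemma weightProd_leading_vertexTerm (hβ : ∀ i, β i ≠ 0) (π π' : Finset (ℕ × ℕ × ℕ)) {r : ℂ}
    (hr : r ≠ 0) :
    weightProd (fun μ => r * betaPow β μ) (-vertexTerm π π') *
        weightProd (fun μ => -r * betaPow β (-μ)) (-vertexTerm π' π) =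
      (-(β 0 * β 1 * β 2)) ^ ((π'.card : ℤ) - π.card) := by
  have h2 : (fun μ => -r * betaPow β (-μ)) = (fun _ => -r) * (betaPow β)⁻¹ := by
    funext μ
    simp [betaPow_neg]
  have hW := weightProd_ne_zero (betaPow_ne_zero hβ) (vertexTerm π π')
  have haug : augmentation (-vertexTerm π' π) = (π'.card : ℤ) - π.card := by
    rw [map_neg, augmentation_vertexTerm, neg_sub]
  rw [show (fun μ => r * betaPow β μ) = (fun _ => r) * betaPow β from rfl, h2,
    weightProd_mul_distrib, weightProd_mul_distrib, weightProd_const hr,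
    weightProd_const (neg_ne_zero.2 hr), weightProd_inv_distrib, weightProd_neg, weightProd_neg,
    inv_inv, weightProd_betaPow_vertexTerm_swap hβ π π', haug, map_neg, augmentation_vertexTerm,
    zpow_neg]
  field_simp
  rw [neg_eq_neg_one_mul r, neg_eq_neg_one_mul (β 0 * β 1 * β 2), mul_zpow (-1) r,
    mul_zpow (-1) (β 0 * β 1 * β 2)]
  ring

lemma brackets_eq_mul_corrections (hβ : ∀ i, β i ≠ 0)
    (π π' : Finset (ℕ × ℕ × ℕ)) {r : ℂ} (hr : r ≠ 0) :
    (∏ᶠ μ, (r * betaPow β μ - r⁻¹ * betaPow β (-μ)) ^ (-vc π π' μ)) *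
        ∏ᶠ μ, (r⁻¹ * betaPow β μ - r * betaPow β (-μ)) ^ (-vc π' π μ) =
      (-(β 0 * β 1 * β 2)) ^ ((π'.card : ℤ) - π.card) *
        (weightProd (fun μ => 1 - (r * betaPow β μ)⁻¹ ^ 2) (-vertexTerm π π') *
          weightProd (fun μ => 1 - (-r * betaPow β (-μ))⁻¹ ^ 2) (-vertexTerm π' π)) := by
  have hfin (x : ℤ × ℤ × ℤ → ℂ) (π π' : Finset (ℕ × ℕ × ℕ)) :
      ∏ᶠ μ, x μ ^ (-vc π π' μ) = weightProd x (-vertexTerm π π') :=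
    finprod_eq_weightProd x (-vertexTerm π π')
  have hb (μ) : r * betaPow β μ - r⁻¹ * betaPow β (-μ) =
      r * betaPow β μ - (r * betaPow β μ)⁻¹ := by
    simp only [mul_inv, betaPow_neg]
  have hb' (μ) : r⁻¹ * betaPow β μ - r * betaPow β (-μ) =
      -r * betaPow β (-μ) - (-r * betaPow β (-μ))⁻¹ := by
    simp only [mul_inv, inv_neg, inv_inv, betaPow_neg]
    ring
  simp only [hb, hb', hfin, weightProd_sub_inv, ← weightProd_leading_vertexTerm hβ π π' hr]
  ring

end Vertex

theorem limit_of_brackets_general (π π' : Finset (ℕ × ℕ × ℕ)) (s : ℕ) (hs : 1 ≤ s) (β : Fin 3 → ℂ)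
    (hβ : ∀ i, β i ≠ 0) :
    Filter.Tendsto
      (fun L : ℝ =>
        (∏ᶠ μ : ℤ × ℤ × ℤ,
            ((Real.sqrt (L ^ s) : ℂ) * betaPow β μ -
              ((Real.sqrt (L ^ s) : ℂ))⁻¹ * betaPow β (-μ)) ^ (-vc π π' μ)) *
        ∏ᶠ μ : ℤ × ℤ × ℤ,
            (((Real.sqrt (L ^ s) : ℂ))⁻¹ * betaPow β μ -
              (Real.sqrt (L ^ s) : ℂ) * betaPow β (-μ)) ^ (-vc π' π μ))
      Filter.atTop
      (nhds ((-(β 0 * β 1 * β 2)) ^ ((π'.card : ℤ) - (π.card : ℤ)))) := by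
  have hroot : Tendsto (fun L : ℝ => Real.sqrt (L ^ s)) atTop atTop :=
    Real.tendsto_sqrt_atTop.comp (tendsto_pow_atTop (by omega))
  have hinv : Tendsto (fun L : ℝ => ((Real.sqrt (L ^ s) : ℂ))⁻¹) atTop (𝓝 0) := by
    simpa [Function.comp_def] using
      (Complex.continuous_ofReal.tendsto 0).comp (tendsto_inv_atTop_zero.comp hroot)
  have hy (μ : ℤ × ℤ × ℤ) :
      Tendsto (fun L : ℝ => ((Real.sqrt (L ^ s) : ℂ) * betaPow β μ)⁻¹) atTop (𝓝 0) := by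
    simpa only [mul_inv, zero_mul] using hinv.mul_const (betaPow β μ)⁻¹
  have hy' (μ : ℤ × ℤ × ℤ) :
      Tendsto (fun L : ℝ => (-(Real.sqrt (L ^ s) : ℂ) * betaPow β (-μ))⁻¹) atTop (𝓝 0) := by
    simpa only [mul_inv, inv_neg, neg_mul, neg_zero, zero_mul] using
      hinv.neg.mul_const (betaPow β (-μ))⁻¹
  have hcorr := (tendsto_weightProd_one_sub_inv_sq hy (-vertexTerm π π')).mul
    (tendsto_weightProd_one_sub_inv_sq hy' (-vertexTerm π' π))
  simpa using (hcorr.const_mul _).congr' <| (hroot.eventually_gt_atTop 0).mono fun L hL =>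
    (brackets_eq_mul_corrections hβ π π' (by exact_mod_cast hL.ne')).symm

/-- **Lemma 6.3.** Let `π, π'` be plane partitions, `s ≥ 1`, and `β₁, β₂, β₃` nonzero complex
numbers. Writing `V(π,π') = Σ_μ c_μ t^μ` and `V(π',π) = Σ_μ d_μ t^μ`, the function
`f(L) = Π_μ (L^{s/2}β^μ − L^{−s/2}β^{−μ})^{−c_μ} · Π_μ (L^{−s/2}β^μ − L^{s/2}β^{−μ})^{−d_μ}`
(with `L^{s/2}` the positive real square root of `L^s`) tends to
`(−β₁β₂β₃)^{|π'|−|π|}` as `L → +∞`. -/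
theorem limit_of_brackets (π π' : Finset (ℕ × ℕ × ℕ)) (hπ : IsPlanePartition π)
    (hπ' : IsPlanePartition π') (s : ℕ) (hs : 1 ≤ s) (β : Fin 3 → ℂ) (hβ : ∀ i, β i ≠ 0) :
    Filter.Tendsto
      (fun L : ℝ =>
        (∏ᶠ μ : ℤ × ℤ × ℤ,
            ((Real.sqrt (L ^ s) : ℂ) * betaPow β μ -
              ((Real.sqrt (L ^ s) : ℂ))⁻¹ * betaPow β (-μ)) ^ (-vc π π' μ)) *
        ∏ᶠ μ : ℤ × ℤ × ℤ,
            (((Real.sqrt (L ^ s) : ℂ))⁻¹ * betaPow β μ -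
              (Real.sqrt (L ^ s) : ℂ) * betaPow β (-μ)) ^ (-vc π' π μ))
      Filter.atTop
      (nhds ((-(β 0 * β 1 * β 2)) ^ ((π'.card : ℤ) - (π.card : ℤ)))) :=
  limit_of_brackets_general π π' s hs β hβ
end

section
/- (Plethystic exponential form of the motivic DT partition function, formula (6.3)/(eqn:motivic_exp)) Work in the field ℚ(ℓ) of rational functions in one variable ℓ (standing for 𝕃^{1/2}). Let r ≥ 1. Then for every N ≥ 0, the coefficient of Q^N in the formal power series Π_{m=1}^{N} Π_{k=0}^{rm−1} (1 − ℓ^{4+2k−rm} Q^m)^{−1} ∈ ℚ(ℓ)⟦Q⟧ equals the coefficient of Q^N in exp(Σ_{m=1}^{N} (1/m)·H_m(Q)), where H_m(Q) := Q^m ℓ^{3m}(ℓ^{rm} − ℓ^{−rm}) / ((1 − Q^m ℓ^{rm})(1 − Q^m ℓ^{−rm})(ℓ^m − ℓ^{−m})), each H_m expanded as a power series in Q by geometric expansion of the factors (1 − Q^m ℓ^{±rm})^{−1}. -/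
/-- The field `ℚ(ℓ)` of rational functions in one variable `ℓ` (standing for `𝕃^{1/2}`). -/
abbrev RF := RatFunc ℚ

/-- The variable `ℓ`. -/
noncomputable def ell : RF := RatFunc.X

/-- `H_m(Q) = Q^m ℓ^{3m}(ℓ^{rm} − ℓ^{−rm}) / ((1 − Q^mℓ^{rm})(1 − Q^mℓ^{−rm})(ℓ^m − ℓ^{−m}))`,
the factors `(1 − Q^m ℓ^{±rm})⁻¹` expanded geometrically as power series in `Q`. -/
noncomputable def Hser (r m : ℕ) : PowerSeries RF :=
  PowerSeries.C
      (ell ^ (3 * (m : ℤ)) * (ell ^ ((r : ℤ) * m) - ell ^ (-((r : ℤ) * m))) /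
        (ell ^ (m : ℤ) - ell ^ (-(m : ℤ)))) *
    PowerSeries.X ^ m *
    (1 - PowerSeries.C (ell ^ ((r : ℤ) * m)) * PowerSeries.X ^ m)⁻¹ *
    (1 - PowerSeries.C (ell ^ (-((r : ℤ) * m))) * PowerSeries.X ^ m)⁻¹

/-- The formal exponential of a power series with zero constant term. -/
noncomputable def psExp {K : Type*} [Field K] (g : PowerSeries K) : PowerSeries K :=
  PowerSeries.mk fun N =>
    ∑ k ∈ Finset.range (N + 1), (Nat.factorial k : K)⁻¹ * PowerSeries.coeff N (g ^ k)

/-!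
Both sides solve `F' = L F` with `F(0) = 1`, and such an equation determines the coefficients of
`F` up to `Q^N` from those of `L` up to `Q^(N-1)`. For the product, `L` is the logarithmic
derivative `∑ₘ ∑ₖ m aₘₖ Q^(m-1) / (1 - aₘₖ Q^m)` with `aₘₖ = ℓ^(4+2k-rm)`; for `exp S` it is `S'`
by the chain rule. The coefficient of `Q^(n-1)` in the first is `∑_{m ∣ n} m ∑ₖ aₘₖ^(n/m)`. By
partial fractions `H_j = ℓ^(3j) / (ℓ^j - ℓ^(-j)) · ((1 - ℓ^(rj) Q^j)⁻¹ - (1 - ℓ^(-rj) Q^j)⁻¹)`,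
so the one in `S'` is `∑_{j ∣ n} (n/j) ℓ^(3j) (ℓ^(rn) - ℓ^(-rn)) / (ℓ^j - ℓ^(-j))`. With
`j = n/m` the two sums agree term by term, since the geometric sum `∑_{k < rq} ℓ^(j(4+2k-rq))`
equals `ℓ^(3j) (ℓ^(rjq) - ℓ^(-rjq)) / (ℓ^j - ℓ^(-j))`.
-/
open PowerSeries Finset

namespace PowerSeries

variable {K : Type*} [Field K]

theorem constantCoeff_one_sub_C_mul_X_pow (a : K) {m : ℕ} (hm : m ≠ 0) :
    constantCoeff (1 - C a * X ^ m) = 1 := by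
  simp [zero_pow hm]

theorem inv_one_sub_C_mul_X_pow_eq_expand (a : K) {m : ℕ} (hm : m ≠ 0) :
    (1 - C a * X ^ m)⁻¹ = expand m hm (rescale a (mk 1)) := by
  rw [PowerSeries.inv_eq_iff_mul_eq_one (by simp [constantCoeff_one_sub_C_mul_X_pow a hm])]
  have h : 1 - C a * X ^ m = expand m hm (rescale a (1 - X)) := by
    simp [rescale_X, expand_C, expand_X]
  rw [h, ← map_mul, ← map_mul, mk_one_mul_one_sub_eq_one, map_one, map_one]

theorem coeff_inv_one_sub_C_mul_X_pow (a : K) {m : ℕ} (hm : m ≠ 0) (n : ℕ) :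
    coeff n (1 - C a * X ^ m)⁻¹ = if m ∣ n then a ^ (n / m) else 0 := by
  simp [inv_one_sub_C_mul_X_pow_eq_expand a hm, coeff_expand, coeff_rescale]

theorem inv_one_sub_C_mul_X_pow_sub_inv (a b : K) {m : ℕ} (hm : m ≠ 0) :
    (1 - C a * X ^ m)⁻¹ - (1 - C b * X ^ m)⁻¹ =
      C (a - b) * X ^ m * (1 - C a * X ^ m)⁻¹ * (1 - C b * X ^ m)⁻¹ := by
  have ha := PowerSeries.mul_inv_cancel (1 - C a * X ^ m)
    (by simp [constantCoeff_one_sub_C_mul_X_pow a hm])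
  have hb := PowerSeries.mul_inv_cancel (1 - C b * X ^ m)
    (by simp [constantCoeff_one_sub_C_mul_X_pow b hm])
  rw [map_sub]
  linear_combination (1 - C b * X ^ m)⁻¹ * ha - (1 - C a * X ^ m)⁻¹ * hb

theorem derivative_inv_one_sub_C_mul_X_pow (a : K) (m : ℕ) :
    d⁄dX K (1 - C a * X ^ m)⁻¹ =
      (C (a * m) * X ^ (m - 1) * (1 - C a * X ^ m)⁻¹) * (1 - C a * X ^ m)⁻¹ := by
  simp only [derivative_inv', map_sub, derivative_one, Derivation.leibniz, derivative_C,
    derivative_pow, derivative_X, smul_eq_mul, map_mul, map_natCast]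
  ring

theorem coeff_C_mul_X_pow_pred_mul_inv_one_sub (a : K) (m i : ℕ) :
    coeff i (C (a * m) * X ^ (m - 1) * (1 - C a * X ^ m)⁻¹) =
      (m : K) * coeff (i + 1) (1 - C a * X ^ m)⁻¹ := by
  rcases eq_or_ne m 0 with rfl | hm
  · simp
  have h := PowerSeries.mul_inv_cancel (1 - C a * X ^ m)
    (by simp [constantCoeff_one_sub_C_mul_X_pow a hm])
  have hX : X * X ^ (m - 1) = (X : K⟦X⟧) ^ m := by
    rw [← pow_succ', Nat.sub_add_cancel (Nat.one_le_iff_ne_zero.mpr hm)]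
  have hXL : X * (C (a * m) * X ^ (m - 1) * (1 - C a * X ^ m)⁻¹) =
      C (m : K) * ((1 - C a * X ^ m)⁻¹ - 1) := by
    rw [map_mul]
    linear_combination C a * C (m : K) * (1 - C a * X ^ m)⁻¹ * hX - C (m : K) * h
  rw [← coeff_succ_X_mul, hXL, coeff_C_mul, map_sub, coeff_one, if_neg i.succ_ne_zero, sub_zero]

theorem derivative_prod_eq_sum_mul {ι : Type*} (s : Finset ι) (g l : ι → K⟦X⟧)
    (h : ∀ i ∈ s, d⁄dX K (g i) = l i * g i) :
    d⁄dX K (∏ i ∈ s, g i) = (∑ i ∈ s, l i) * ∏ i ∈ s, g i := by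
  induction s using Finset.cons_induction with
  | empty => simp
  | cons i s hi ih =>
    rw [prod_cons, sum_cons, Derivation.leibniz, h i (mem_cons_self i s),
      ih fun j hj => h j (mem_cons_of_mem hj), smul_eq_mul, smul_eq_mul]
    ring

theorem coeff_eq_of_derivative_eq_mul [CharZero K] {F G L M : K⟦X⟧} {N : ℕ}
    (hF : d⁄dX K F = L * F) (hG : d⁄dX K G = M * G) (h₀ : coeff 0 F = coeff 0 G)
    (hLM : ∀ i < N, coeff i L = coeff i M) : ∀ n ≤ N, coeff n F = coeff n G := by
  intro n
  induction n using Nat.strong_induction_on with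
  | _ n ih =>
    intro hn
    match n with
    | 0 => exact h₀
    | n + 1 =>
      have h : coeff (n + 1) F * (n + 1) = coeff (n + 1) G * (n + 1) := by
        rw [← coeff_derivative, ← coeff_derivative, hF, hG, coeff_mul, coeff_mul]
        refine sum_congr rfl fun p hp => ?_
        rw [HasAntidiagonal.mem_antidiagonal] at hp
        rw [hLM p.1 (by omega), ih p.2 (by omega) (by omega)]
      exact mul_right_cancel₀ (Nat.cast_add_one_ne_zero n) h

end PowerSeries

section psExp

variable {K : Type*} [Field K] [CharZero K]

theorem psExp_eq_subst_exp {f : K⟦X⟧} (hf : constantCoeff f = 0) :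
    psExp f = (exp K).subst f := by
  ext n
  rw [psExp, coeff_mk, coeff_subst' (HasSubst.of_constantCoeff_zero' hf),
    finsum_eq_sum_of_support_subset (s := range (n + 1))]
  · refine sum_congr rfl fun k _ => ?_
    simp [coeff_exp]
  · intro k hk
    rw [coe_range, Set.mem_Iio]
    by_contra! h
    refine hk ?_
    change coeff k (exp K) • coeff n (f ^ k) = 0
    rw [coeff_of_lt_order n ((Nat.cast_lt.mpr (by omega)).trans_le
      (le_order_pow_of_constantCoeff_eq_zero k hf)), smul_zero]

theorem derivative_psExp {f : K⟦X⟧} (hf : constantCoeff f = 0) :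
    d⁄dX K (psExp f) = d⁄dX K f * psExp f := by
  rw [psExp_eq_subst_exp hf, derivative_subst (HasSubst.of_constantCoeff_zero' hf),
    derivative_exp, mul_comm]

end psExp

theorem sum_range_zpow_eq_div {K : Type*} [Field K] {u : K} (hu : u - u⁻¹ ≠ 0) (n : ℕ) :
    ∑ k ∈ range n, u ^ (2 * (k : ℤ) + 1 - n) = (u ^ (n : ℤ) - u ^ (-(n : ℤ))) / (u - u⁻¹) := by
  have hu₀ : u ≠ 0 := by rintro rfl; simp at hu
  rw [eq_div_iff hu, sum_mul]
  have h := sum_range_sub (fun k : ℕ => u ^ (2 * (k : ℤ) - n)) n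
  simp only [Nat.cast_add, Nat.cast_one, Nat.cast_zero, mul_zero, zero_sub] at h
  rw [show 2 * (n : ℤ) - n = n by ring] at h
  rw [← h]
  refine sum_congr rfl fun k _ => ?_
  rw [mul_sub, ← zpow_add_one₀ hu₀, ← zpow_sub_one₀ hu₀]
  ring_nf

theorem sum_Icc_ite_dvd_eq_sum_divisors {M : Type*} [AddCommMonoid M] (f : ℕ → M) {n N : ℕ}
    (hn : n ≠ 0) (hnN : n ≤ N) :
    ∑ m ∈ Icc 1 N, (if m ∣ n then f m else 0) = ∑ m ∈ n.divisors, f m := by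
  rw [← sum_filter]
  congr 1
  ext m
  simp only [mem_filter, mem_Icc, Nat.mem_divisors]
  constructor
  · rintro ⟨-, hd⟩
    exact ⟨hd, hn⟩
  · rintro ⟨hd, -⟩
    exact ⟨⟨Nat.pos_of_dvd_of_pos hd (Nat.pos_of_ne_zero hn),
      (Nat.le_of_dvd (Nat.pos_of_ne_zero hn) hd).trans hnN⟩, hd⟩

theorem intDegree_ell_pow (n : ℕ) : (ell ^ n).intDegree = n := by
  rw [ell, ← RatFunc.algebraMap_X, ← map_pow, RatFunc.intDegree_polynomial,
    Polynomial.natDegree_X_pow]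

theorem ell_pow_sub_inv_ne_zero {n : ℕ} (hn : n ≠ 0) : ell ^ n - (ell ^ n)⁻¹ ≠ 0 := by
  rw [sub_ne_zero]
  intro h
  have := congrArg RatFunc.intDegree h
  rw [RatFunc.intDegree_inv, intDegree_ell_pow] at this
  omega

noncomputable def HserCoeff (r j q : ℕ) : RF :=
  ell ^ (3 * (j : ℤ)) / (ell ^ (j : ℤ) - ell ^ (-(j : ℤ))) *
    ((ell ^ ((r : ℤ) * j)) ^ q - (ell ^ (-((r : ℤ) * j))) ^ q)

theorem Hser_eq_C_mul_sub (r : ℕ) {j : ℕ} (hj : j ≠ 0) :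
    Hser r j = C (ell ^ (3 * (j : ℤ)) / (ell ^ (j : ℤ) - ell ^ (-(j : ℤ)))) *
      ((1 - C (ell ^ ((r : ℤ) * j)) * X ^ j)⁻¹ -
        (1 - C (ell ^ (-((r : ℤ) * j))) * X ^ j)⁻¹) := by
  rw [inv_one_sub_C_mul_X_pow_sub_inv _ _ hj, Hser, mul_div_right_comm, map_mul]
  ring

theorem coeff_Hser (r : ℕ) {j : ℕ} (hj : j ≠ 0) (n : ℕ) :
    coeff n (Hser r j) = if j ∣ n then HserCoeff r j (n / j) else 0 := by
  rw [Hser_eq_C_mul_sub r hj, coeff_C_mul, map_sub, coeff_inv_one_sub_C_mul_X_pow _ hj,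
    coeff_inv_one_sub_C_mul_X_pow _ hj, HserCoeff]
  split_ifs <;> simp

theorem sum_range_ell_zpow_pow_eq_HserCoeff (r q : ℕ) {j : ℕ} (hj : j ≠ 0) :
    ∑ k ∈ range (r * q), (ell ^ (4 + 2 * (k : ℤ) - r * q)) ^ j = HserCoeff r j q := by
  have hu : ell ^ (j : ℤ) - (ell ^ (j : ℤ))⁻¹ ≠ 0 := by
    rw [zpow_natCast]
    exact ell_pow_sub_inv_ne_zero hj
  have hℓ : ell ≠ 0 := RatFunc.X_ne_zero
  have hterm : ∀ k : ℕ, (ell ^ (4 + 2 * (k : ℤ) - r * q)) ^ j =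
      (ell ^ (j : ℤ)) ^ (3 : ℤ) * (ell ^ (j : ℤ)) ^ (2 * (k : ℤ) + 1 - (r * q : ℕ)) := by
    intro k
    rw [← zpow_add₀ (zpow_ne_zero _ hℓ), ← zpow_natCast, ← zpow_mul, ← zpow_mul]
    push_cast
    ring_nf
  rw [sum_congr rfl fun k _ => hterm k, ← mul_sum, sum_range_zpow_eq_div hu, HserCoeff]
  simp only [← zpow_natCast, ← zpow_mul, ← zpow_neg]
  push_cast
  ring_nf

theorem sum_coeff_inv_one_sub_eq_sum_coeff_Hser (r : ℕ) {n N : ℕ} (hn : n ≠ 0) (hnN : n ≤ N) :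
    ∑ m ∈ Icc 1 N, ∑ k ∈ range (r * m),
        (m : RF) * coeff n (1 - C (ell ^ (4 + 2 * (k : ℤ) - r * m)) * X ^ m)⁻¹ =
      (∑ m ∈ Icc 1 N, (m : RF)⁻¹ * coeff n (Hser r m)) * n := by
  have hL : ∀ m ∈ Icc 1 N, ∑ k ∈ range (r * m),
      (m : RF) * coeff n (1 - C (ell ^ (4 + 2 * (k : ℤ) - r * m)) * X ^ m)⁻¹ =
        if m ∣ n then m * HserCoeff r (n / m) m else 0 := by
    intro m hm
    have hm₀ : m ≠ 0 := by grind
    simp only [coeff_inv_one_sub_C_mul_X_pow _ hm₀]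
    split_ifs with hd
    · rw [← mul_sum, sum_range_ell_zpow_pow_eq_HserCoeff r m
        ((Nat.div_ne_zero_iff_of_dvd hd).mpr ⟨hn, hm₀⟩)]
    · simp
  have hR : ∀ m ∈ Icc 1 N, (m : RF)⁻¹ * coeff n (Hser r m) =
      if m ∣ n then (m : RF)⁻¹ * HserCoeff r m (n / m) else 0 := by
    intro m hm
    rw [coeff_Hser r (by grind)]
    split_ifs <;> simp
  rw [sum_congr rfl hL, sum_congr rfl hR, sum_Icc_ite_dvd_eq_sum_divisors _ hn hnN,
    sum_Icc_ite_dvd_eq_sum_divisors _ hn hnN, sum_mul, ← Nat.sum_div_divisors]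
  refine sum_congr rfl fun m hm => ?_
  obtain ⟨⟨q, rfl⟩, -⟩ := Nat.mem_divisors.mp hm
  have hm₀ : m ≠ 0 := left_ne_zero_of_mul hn
  rw [Nat.mul_div_cancel_left q (Nat.pos_of_ne_zero hm₀),
    Nat.mul_div_cancel m (Nat.pos_of_ne_zero (right_ne_zero_of_mul hn))]
  push_cast
  field_simp

theorem motivic_plethystic_exp_general (r : ℕ) (N : ℕ) :
    PowerSeries.coeff N
        (∏ m ∈ Finset.Icc 1 N, ∏ k ∈ Finset.range (r * m),
          (1 - PowerSeries.C (ell ^ (4 + 2 * (k : ℤ) - (r : ℤ) * m)) *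
            PowerSeries.X ^ m)⁻¹)
      = PowerSeries.coeff N
          (psExp (∑ m ∈ Finset.Icc 1 N, PowerSeries.C (m : RF)⁻¹ * Hser r m)) := by
  have hS : constantCoeff (∑ m ∈ Icc 1 N, C (m : RF)⁻¹ * Hser r m) = 0 := by
    refine (map_sum _ _ _).trans (sum_eq_zero fun m hm => ?_)
    rw [map_mul, ← coeff_zero_eq_constantCoeff_apply (Hser r m), coeff_Hser r (by grind)]
    simp [HserCoeff]
  refine coeff_eq_of_derivative_eq_mul
    (derivative_prod_eq_sum_mul _ _ _ fun m _ => derivative_prod_eq_sum_mul _ _ _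
      fun k _ => derivative_inv_one_sub_C_mul_X_pow _ m)
    (derivative_psExp hS) ?_ (fun i hi => ?_) N le_rfl
  · simp only [coeff_zero_eq_constantCoeff, map_prod, constantCoeff_inv, psExp, coeff_mk,
      zero_add, sum_range_one, pow_zero, Nat.factorial_zero, Nat.cast_one, inv_one, one_mul,
      map_one]
    exact prod_eq_one fun m hm => prod_eq_one fun k _ => by
      rw [constantCoeff_one_sub_C_mul_X_pow _ (by grind), inv_one]
  · simp only [map_sum, coeff_C_mul_X_pow_pred_mul_inv_one_sub, coeff_derivative, coeff_C_mul]
    rw [← sum_mul]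
    exact_mod_cast sum_coeff_inv_one_sub_eq_sum_coeff_Hser r (n := i + 1) (by omega) hi

/-- **(Plethystic exponential form of the motivic DT partition function.)** For every `r ≥ 1`
and `N ≥ 0`, the coefficient of `Q^N` in `Π_{m=1}^{N} Π_{k=0}^{rm−1} (1 − ℓ^{4+2k−rm} Q^m)^{−1}`
equals the coefficient of `Q^N` in `exp(Σ_{m=1}^{N} (1/m)·H_m(Q))`. -/
theorem motivic_plethystic_exp (r : ℕ) (hr : 1 ≤ r) (N : ℕ) :
    PowerSeries.coeff N
        (∏ m ∈ Finset.Icc 1 N, ∏ k ∈ Finset.range (r * m),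
          (1 - PowerSeries.C (ell ^ (4 + 2 * (k : ℤ) - (r : ℤ) * m)) *
            PowerSeries.X ^ m)⁻¹)
      = PowerSeries.coeff N
          (psExp (∑ m ∈ Finset.Icc 1 N, PowerSeries.C (m : RF)⁻¹ * Hser r m)) :=
  motivic_plethystic_exp_general r N
end
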